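/- The image of ℤ^n under r equals 𝒩, the set of dominant ν ∈ ℚ^n such that S_n(ν) ∈ ℤ and S_i(ν) ∈ ℤ for every i ∈ {1,…,n−1} with ν_i > ν_{i+1}. -/

import Mathlib

/-- The dominant cone `C = {x ∈ ℝⁿ : x₁ ≥ x₂ ≥ ⋯ ≥ xₙ}`. -/
def domCone (n : ℕ) : Set (EuclideanSpace ℝ (Fin n)) :=
  {x | ∀ i j : Fin n, i ≤ j → x j ≤ x i}

/-- `r` is the map sending each point of `ℝⁿ` to the (unique) closest point
of the dominant cone. -/
def IsClosestPointMap (n : ℕ)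
    (r : EuclideanSpace ℝ (Fin n) → EuclideanSpace ℝ (Fin n)) : Prop :=
  ∀ x, r x ∈ domCone n ∧ ∀ c ∈ domCone n, dist x (r x) ≤ dist x c

/-- `S_k(x) = x₁ + ⋯ + x_k`, the sum of the first `k` coordinates. -/
def psum {n : ℕ} (x : Fin n → ℝ) (k : ℕ) : ℝ :=
  ∑ j ∈ Finset.univ.filter (fun j : Fin n => (j : ℕ) < k), x j

/-- The set `𝒩` of Newton points for `GL_n`: dominant rational `ν` with
`S_n(ν) ∈ ℤ` and `S_i(ν) ∈ ℤ` whenever `ν_i > ν_{i+1}` (`1 ≤ i ≤ n-1`). -/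
def newtonSet (n : ℕ) : Set (EuclideanSpace ℝ (Fin n)) :=
  {ν | (∀ i j : Fin n, i ≤ j → ν j ≤ ν i) ∧
       (∀ i, ∃ q : ℚ, ν i = (q : ℝ)) ∧
       (∃ m : ℤ, psum ν n = (m : ℝ)) ∧
       (∀ i : ℕ, ∀ h1 : 1 ≤ i, ∀ h2 : i < n,
          ν ⟨i, h2⟩ < ν ⟨i - 1, by omega⟩ → ∃ m : ℤ, psum ν i = (m : ℝ))}

/-!
Because `C` is a convex cone, `ν = r x` is characterized by `ν ∈ C`, `⟪x - ν, ν⟫ = 0` and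
`⟪x - ν, c⟫ ≤ 0` for all `c ∈ C`. By Abel summation the dual cone of `C` is cut out by
`S_n = 0` and `S_k ≤ 0`, so these conditions say: `S_n(x) = S_n(ν)`, `S_k(x) ≤ S_k(ν)` for all `k`,
with equality at every jump of `ν`. For integral `x` this makes `S_k(ν)` an integer at the jumps
and at `n`, and on a block `[a, c)` of equal coordinates `ν_i = (S_c(ν) - S_a(ν)) / (c - a)` is
rational. Conversely, for `ν ∈ 𝒩` the integral `x` with `S_k(x) = ⌊S_k(ν)⌋` satisfies the
conditions, so `r x = ν`.
-/

open Finset RealInnerProductSpace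

section ClosestPoint

variable {F : Type*} [NormedAddCommGroup F] [InnerProductSpace ℝ F] {K : Set F} {x v : F}

theorem forall_dist_le_iff_real_inner_le_zero (hK : Convex ℝ K) (hv : v ∈ K) :
    (∀ w ∈ K, dist x v ≤ dist x w) ↔ ∀ w ∈ K, ⟪x - v, w - v⟫ ≤ 0 := by
  have : Nonempty K := ⟨⟨v, hv⟩⟩
  have hbdd : BddBelow (Set.range fun w : K => ‖x - w‖) :=
    ⟨0, Set.forall_mem_range.2 fun _ => norm_nonneg _⟩
  simp only [dist_eq_norm, ← norm_eq_iInf_iff_real_inner_le_zero hK hv]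
  constructor
  · intro h
    exact le_antisymm (le_ciInf fun w => h w w.2) (ciInf_le hbdd ⟨v, hv⟩)
  · intro h w hw
    rw [h]
    exact ciInf_le hbdd ⟨w, hw⟩

theorem Convex.eq_of_forall_dist_le (hK : Convex ℝ K) {w : F} (hv : v ∈ K) (hw : w ∈ K)
    (hv_min : ∀ u ∈ K, dist x v ≤ dist x u) (hw_min : ∀ u ∈ K, dist x w ≤ dist x u) :
    v = w := by
  have h₁ := (forall_dist_le_iff_real_inner_le_zero hK hv).1 hv_min w hw
  have h₂ := (forall_dist_le_iff_real_inner_le_zero hK hw).1 hw_min v hv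
  have hsum : ⟪x - v, w - v⟫ + ⟪x - w, v - w⟫ = ⟪w - v, w - v⟫ := by
    rw [← neg_sub w v, inner_neg_right, ← sub_eq_add_neg, ← inner_sub_left, sub_sub_sub_cancel_left]
  exact (sub_eq_zero.1 (real_inner_self_nonpos.1 (by linarith))).symm

theorem forall_dist_le_iff_of_add_mem (hK : Convex ℝ K) (hK_zero : (0 : F) ∈ K)
    (hK_add : ∀ a ∈ K, ∀ b ∈ K, a + b ∈ K) (hv : v ∈ K) :
    (∀ w ∈ K, dist x v ≤ dist x w) ↔ ⟪x - v, v⟫ = 0 ∧ ∀ w ∈ K, ⟪x - v, w⟫ ≤ 0 := by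
  rw [forall_dist_le_iff_real_inner_le_zero hK hv]
  constructor
  · intro h
    have h₂ := h (v + v) (hK_add v hv v hv)
    have h₀ := h 0 hK_zero
    rw [add_sub_cancel_right] at h₂
    rw [zero_sub, inner_neg_right] at h₀
    exact ⟨by linarith, fun w hw => by simpa using h (w + v) (hK_add w hw v hv)⟩
  · rintro ⟨hv₀, hK⟩ w hw
    rw [inner_sub_right, hv₀, sub_zero]
    exact hK w hw

end ClosestPoint

theorem exists_rat_of_forall_sum_int {ι : Type*} [Fintype ι] (ν : ι → ℝ)
    (h : ∀ s : Finset ι, (∀ i ∉ s, ∀ j ∈ s, ν i < ν j) → ∃ m : ℤ, ∑ j ∈ s, ν j = m) (i : ι) :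
    ∃ q : ℚ, ν i = q := by
  -- `ν i` times the size of its level set is the difference of two such integral sums.
  obtain ⟨a, ha⟩ := h {j | ν i < ν j} <| by
    simp only [mem_filter, mem_univ, true_and, not_lt]
    exact fun _ hi _ hj => hi.trans_lt hj
  obtain ⟨b, hb⟩ := h {j | ν i ≤ ν j} <| by
    simp only [mem_filter, mem_univ, true_and, not_le]
    exact fun _ hi _ hj => hi.trans_le hj
  set N := #{j | ν j = ν i}
  have hN : N ≠ 0 := card_ne_zero.2 ⟨i, by simp⟩
  have hlevel : (N : ℝ) * ν i = b - a := by
    rw [← ha, ← hb, ← nsmul_eq_mul, ← sum_const, sum_filter, sum_filter, sum_filter,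
      ← sum_sub_distrib]
    refine sum_congr rfl fun j _ => ?_
    rcases lt_trichotomy (ν i) (ν j) with hij | hij | hij
    · simp [hij, hij.le, hij.ne']
    · simp [hij]
    · simp [hij.not_ge, hij.not_gt, hij.ne]
  exact ⟨(b - a) / N, by push_cast; field_simp; linarith⟩

section DominantCone

variable {n : ℕ}

def zeroExtend (y : Fin n → ℝ) (j : ℕ) : ℝ := if h : j < n then y ⟨j, h⟩ else 0

theorem zeroExtend_of_lt (y : Fin n → ℝ) {j : ℕ} (h : j < n) : zeroExtend y j = y ⟨j, h⟩ :=
  dif_pos h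

theorem zeroExtend_of_le (y : Fin n → ℝ) {j : ℕ} (h : n ≤ j) : zeroExtend y j = 0 :=
  dif_neg h.not_gt

theorem psum_eq_sum_range (y : Fin n → ℝ) (k : ℕ) :
    psum y k = ∑ j ∈ range k, zeroExtend y j := by
  have hy : ∀ i : Fin n,
      (if (i : ℕ) < k then y i else 0) = if (i : ℕ) < k then zeroExtend y i else 0 :=
    fun i => by rw [zeroExtend_of_lt y i.isLt]
  rw [psum, sum_filter, sum_congr rfl fun i _ => hy i,
    Fin.sum_univ_eq_sum_range (fun j => if j < k then zeroExtend y j else 0), ← sum_filter]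
  refine sum_subset (fun j => by simp only [mem_filter, mem_range]; omega) fun j hj hj' => ?_
  simp only [mem_filter, mem_range] at hj hj'
  exact zeroExtend_of_le y (by omega)

theorem psum_zero (y : Fin n → ℝ) : psum y 0 = 0 := by
  simp [psum_eq_sum_range]

theorem psum_succ (y : Fin n → ℝ) (k : ℕ) : psum y (k + 1) = psum y k + zeroExtend y k := by
  simp [psum_eq_sum_range, sum_range_succ]

theorem psum_sub (x y : EuclideanSpace ℝ (Fin n)) (k : ℕ) :
    psum (x - y) k = psum x k - psum y k := by
  simp [psum, sum_sub_distrib]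

theorem exists_int_psum_of_int {x : Fin n → ℝ} (hx : ∀ i, ∃ m : ℤ, x i = m) (k : ℕ) :
    ∃ m : ℤ, psum x k = m := by
  choose m hm using hx
  exact ⟨∑ j ∈ univ.filter fun j : Fin n => (j : ℕ) < k, m j, by simp [psum, hm]⟩

theorem inner_eq_sum_of_psum_eq_zero {y : EuclideanSpace ℝ (Fin n)} (hy : psum y n = 0)
    (c : EuclideanSpace ℝ (Fin n)) :
    ⟪y, c⟫ = ∑ k ∈ range (n - 1), (zeroExtend c k - zeroExtend c (k + 1)) * psum y (k + 1) := by
  have hparts := sum_range_by_parts (zeroExtend c) (zeroExtend y) n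
  simp only [smul_eq_mul, ← psum_eq_sum_range, hy, mul_zero, zero_sub, ← sum_neg_distrib,
    ← neg_mul, neg_sub] at hparts
  rw [← hparts, ← Fin.sum_univ_eq_sum_range]
  simp [PiLp.inner_apply, zeroExtend_of_lt, mul_comm]

theorem convex_domCone : Convex ℝ (domCone n) := by
  intro a ha b hb s t hs ht _ i j hij
  simp only [PiLp.add_apply, PiLp.smul_apply, smul_eq_mul]
  have := ha i j hij
  have := hb i j hij
  nlinarith

theorem zero_mem_domCone : (0 : EuclideanSpace ℝ (Fin n)) ∈ domCone n :=
  fun _ _ _ => le_rfl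

theorem add_mem_domCone {a b : EuclideanSpace ℝ (Fin n)} (ha : a ∈ domCone n)
    (hb : b ∈ domCone n) : a + b ∈ domCone n :=
  fun i j hij => add_le_add (ha i j hij) (hb i j hij)

theorem zeroExtend_succ_le {c : EuclideanSpace ℝ (Fin n)} (hc : c ∈ domCone n) {k : ℕ}
    (hk : k + 1 < n) : zeroExtend c (k + 1) ≤ zeroExtend c k := by
  rw [zeroExtend_of_lt _ hk, zeroExtend_of_lt _ (by omega)]
  exact hc _ _ (Fin.mk_le_mk.2 k.le_succ)

def initialOnes (n k : ℕ) : EuclideanSpace ℝ (Fin n) :=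
  WithLp.toLp 2 fun j => if (j : ℕ) < k then 1 else 0

theorem initialOnes_mem_domCone (k : ℕ) : initialOnes n k ∈ domCone n := by
  intro i j hij
  have : (i : ℕ) ≤ j := hij
  simp only [initialOnes]
  split_ifs <;> first | omega | norm_num

theorem neg_initialOnes_mem_domCone : -initialOnes n n ∈ domCone n := by
  intro i j _
  simp [initialOnes]

theorem inner_initialOnes (y : EuclideanSpace ℝ (Fin n)) (k : ℕ) :
    ⟪y, initialOnes n k⟫ = psum y k := by
  simp [initialOnes, PiLp.inner_apply, psum, sum_filter]

theorem forall_inner_domCone_nonpos_iff (y : EuclideanSpace ℝ (Fin n)) :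
    (∀ c ∈ domCone n, ⟪y, c⟫ ≤ 0) ↔ psum y n = 0 ∧ ∀ k, psum y k ≤ 0 := by
  constructor
  · intro h
    have hle : ∀ k, psum y k ≤ 0 := fun k => by
      simpa [inner_initialOnes] using h _ (initialOnes_mem_domCone k)
    have hge : 0 ≤ psum y n := by
      simpa [inner_neg_right, inner_initialOnes] using h _ neg_initialOnes_mem_domCone
    exact ⟨le_antisymm (hle n) hge, hle⟩
  · rintro ⟨hy, hle⟩ c hc
    rw [inner_eq_sum_of_psum_eq_zero hy]
    refine sum_nonpos fun k hk => mul_nonpos_of_nonneg_of_nonpos ?_ (hle _)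
    exact sub_nonneg.2 (zeroExtend_succ_le hc (by simp at hk; omega))

theorem inner_domCone_eq_zero_iff {y ν : EuclideanSpace ℝ (Fin n)} (hν : ν ∈ domCone n)
    (hy : psum y n = 0) (hle : ∀ k, psum y k ≤ 0) :
    ⟪y, ν⟫ = 0 ↔ ∀ i (h1 : 1 ≤ i) (h2 : i < n), ν ⟨i, h2⟩ < ν ⟨i - 1, by omega⟩ → psum y i = 0 := by
  have hterm : ∀ k ∈ range (n - 1), (zeroExtend ν k - zeroExtend ν (k + 1)) * psum y (k + 1) ≤ 0 :=
    fun k hk => mul_nonpos_of_nonneg_of_nonpos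
      (sub_nonneg.2 (zeroExtend_succ_le hν (by simp at hk; omega))) (hle _)
  rw [inner_eq_sum_of_psum_eq_zero hy, sum_eq_zero_iff_of_nonpos hterm]
  constructor
  · rintro h (_ | k) h1 h2 hjump
    · omega
    have hk := h k (mem_range.2 (by omega))
    rw [zeroExtend_of_lt _ h2, zeroExtend_of_lt _ (by omega)] at hk
    exact (mul_eq_zero.1 hk).resolve_left (sub_ne_zero.2 hjump.ne')
  · intro h k hk
    have hk' : k + 1 < n := by simp at hk; omega
    rcases (zeroExtend_succ_le hν hk').lt_or_eq with hjump | heq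
    · rw [zeroExtend_of_lt _ hk', zeroExtend_of_lt _ (by omega)] at hjump
      rw [h (k + 1) (by omega) hk' hjump, mul_zero]
    · rw [heq, sub_self, zero_mul]

theorem forall_dist_le_iff_psum {x ν : EuclideanSpace ℝ (Fin n)} (hν : ν ∈ domCone n) :
    (∀ c ∈ domCone n, dist x ν ≤ dist x c) ↔
      psum x n = psum ν n ∧ (∀ k, psum x k ≤ psum ν k) ∧
        ∀ i (h1 : 1 ≤ i) (h2 : i < n), ν ⟨i, h2⟩ < ν ⟨i - 1, by omega⟩ → psum x i = psum ν i := by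
  rw [forall_dist_le_iff_of_add_mem convex_domCone zero_mem_domCone
    (fun _ ha _ hb => add_mem_domCone ha hb) hν, forall_inner_domCone_nonpos_iff]
  constructor
  · rintro ⟨horth, hsum, hle⟩
    have hjump := (inner_domCone_eq_zero_iff hν hsum hle).1 horth
    simp only [psum_sub, sub_eq_zero, sub_nonpos] at hsum hle hjump
    exact ⟨hsum, hle, hjump⟩
  · rintro ⟨hsum, hle, hjump⟩
    have hsum' : psum (x - ν) n = 0 := by rw [psum_sub, hsum, sub_self]
    have hle' : ∀ k, psum (x - ν) k ≤ 0 := fun k => by rw [psum_sub, sub_nonpos]; exact hle k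
    refine ⟨(inner_domCone_eq_zero_iff hν hsum' hle').2 fun i h1 h2 hi => ?_, hsum', hle'⟩
    rw [psum_sub, hjump i h1 h2 hi, sub_self]

theorem exists_int_sum_of_jumps {ν : EuclideanSpace ℝ (Fin n)} (hν : ν ∈ domCone n)
    (hsum : ∃ m : ℤ, psum ν n = m)
    (hjump : ∀ i (h1 : 1 ≤ i) (h2 : i < n), ν ⟨i, h2⟩ < ν ⟨i - 1, by omega⟩ →
      ∃ m : ℤ, psum ν i = m)
    {s : Finset (Fin n)} (hs : ∀ i ∉ s, ∀ j ∈ s, ν i < ν j) :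
    ∃ m : ℤ, ∑ j ∈ s, ν j = m := by
  rcases sᶜ.eq_empty_or_nonempty with hcompl | hcompl
  · rw [(compl_eq_empty_iff s).1 hcompl]
    simpa [psum] using hsum
  set i₀ := sᶜ.min' hcompl
  have hi₀ : i₀ ∉ s := mem_compl.1 (min'_mem _ hcompl)
  have hs_eq : s = univ.filter fun j : Fin n => (j : ℕ) < i₀ := by
    ext j
    simp only [mem_filter, mem_univ, true_and]
    constructor
    · intro hj
      by_contra hle
      exact (hν i₀ j (not_lt.1 hle)).not_gt (hs i₀ hi₀ j hj)
    · intro hj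
      by_contra hjs
      exact (min'_le _ j (mem_compl.2 hjs)).not_gt hj
  rw [hs_eq]
  change ∃ m : ℤ, psum ν i₀ = m
  rcases Nat.eq_zero_or_pos (i₀ : ℕ) with h0 | hpos
  · exact ⟨0, by rw [h0, psum_zero, Int.cast_zero]⟩
  refine hjump i₀ hpos i₀.isLt (hs i₀ hi₀ _ ?_)
  rw [hs_eq]
  simp only [mem_filter, mem_univ, true_and]
  omega

theorem exists_int_psum_eq_floor (ν : Fin n → ℝ) :
    ∃ x : EuclideanSpace ℝ (Fin n), (∀ i, ∃ m : ℤ, x i = m) ∧ ∀ k, psum x k = ⌊psum ν k⌋ := by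
  set x : EuclideanSpace ℝ (Fin n) :=
    WithLp.toLp 2 fun j => ((⌊psum ν (j + 1)⌋ - ⌊psum ν j⌋ : ℤ) : ℝ)
  refine ⟨x, fun i => ⟨_, rfl⟩, fun k => ?_⟩
  have hx : ∀ j, zeroExtend x j = ⌊psum ν (j + 1)⌋ - ⌊psum ν j⌋ := by
    intro j
    rcases lt_or_ge j n with hj | hj
    · simp [x, zeroExtend_of_lt _ hj]
    · rw [zeroExtend_of_le _ hj, psum_succ, zeroExtend_of_le _ hj, add_zero, sub_self]
  rw [psum_eq_sum_range, sum_congr rfl fun j _ => hx j,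
    sum_range_sub (fun j => (⌊psum ν j⌋ : ℝ)), psum_zero]
  simp

end DominantCone

theorem stmt_5_general (n : ℕ)
    (r : EuclideanSpace ℝ (Fin n) → EuclideanSpace ℝ (Fin n))
    (hr : IsClosestPointMap n r) :
    r '' {x : EuclideanSpace ℝ (Fin n) | ∀ i, ∃ m : ℤ, x i = (m : ℝ)} = newtonSet n := by
  ext ν
  constructor
  · rintro ⟨x, hx, rfl⟩
    obtain ⟨hC, hmin⟩ := hr x
    obtain ⟨hsum, -, hjump⟩ := (forall_dist_le_iff_psum hC).1 hmin
    have hsum' : ∃ m : ℤ, psum (r x) n = m := hsum ▸ exists_int_psum_of_int hx n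
    have hjump' : ∀ i (h1 : 1 ≤ i) (h2 : i < n), r x ⟨i, h2⟩ < r x ⟨i - 1, by omega⟩ →
        ∃ m : ℤ, psum (r x) i = m :=
      fun i h1 h2 hi => hjump i h1 h2 hi ▸ exists_int_psum_of_int hx i
    have hrat :=
      exists_rat_of_forall_sum_int _ fun _ hs => exists_int_sum_of_jumps hC hsum' hjump' hs
    exact ⟨hC, hrat, hsum', hjump'⟩
  · rintro ⟨hC, -, ⟨m, hm⟩, hjump⟩
    obtain ⟨x, hx, hfloor⟩ := exists_int_psum_eq_floor ν
    have hmin : ∀ c ∈ domCone n, dist x ν ≤ dist x c := by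
      refine (forall_dist_le_iff_psum hC).2 ⟨?_, fun k => ?_, fun i h1 h2 hi => ?_⟩
      · rw [hfloor, hm, Int.floor_intCast]
      · exact hfloor k ▸ Int.floor_le _
      · obtain ⟨m, hm⟩ := hjump i h1 h2 hi
        rw [hfloor, hm, Int.floor_intCast]
    exact ⟨x, hx, convex_domCone.eq_of_forall_dist_le (hr x).1 hC (hr x).2 hmin⟩

/-- Proposition 1.1(5) for `GL_n`: `r(ℤⁿ) = 𝒩`. -/
theorem stmt_5 (n : ℕ) (hn : 1 ≤ n)
    (r : EuclideanSpace ℝ (Fin n) → EuclideanSpace ℝ (Fin n))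
    (hr : IsClosestPointMap n r) :
    r '' {x : EuclideanSpace ℝ (Fin n) | ∀ i, ∃ m : ℤ, x i = (m : ℝ)} = newtonSet n :=
  stmt_5_general n r hr
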